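/- For every hard-core configuration σ on the 2K×3L triangular grid Λ and every vertical stripe C = C_{3j} (whose middle column lies in Λ_b), the number of particles of σ in C is at most K (equivalently, ΔH_C(σ) = K − Σ_{v∈C} σ(v) ≥ 0); moreover, if σ has at least one particle in C ∩ Λ_b, then ΔH_C(σ) = 0 if and only if σ has a black vertical bridge in C, i.e., σ agrees with b on C. -/
import Mathlib


open Finset

variable (K L : ℕ) [NeZero K] [NeZero L]

/-- Vertices of the `2K × 3L` triangular grid: pairs `(i,j) ∈ (ℤ/2K) × (ℤ/6L)` with `i+j` even. -/
abbrev Vert (K L : ℕ) [NeZero K] [NeZero L] : Type :=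
  {p : ZMod (2 * K) × ZMod (6 * L) // (p.1.val + p.2.val) % 2 = 0}

/-- Adjacency in the triangular grid with periodic boundary conditions. -/
abbrev Adj (v w : Vert K L) : Prop :=
  (w.1.1 = v.1.1 ∧ (w.1.2 = v.1.2 + 2 ∨ w.1.2 = v.1.2 - 2)) ∨
  ((w.1.1 = v.1.1 + 1 ∨ w.1.1 = v.1.1 - 1) ∧ (w.1.2 = v.1.2 + 1 ∨ w.1.2 = v.1.2 - 1))

/-- A particle configuration on the grid. -/
abbrev Cfg (K L : ℕ) [NeZero K] [NeZero L] : Type := Vert K L → Bool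

/-- Hard-core condition: no two adjacent occupied sites. -/
abbrev HardCore (σ : Cfg K L) : Prop :=
  ∀ v w : Vert K L, Adj K L v w → ¬(σ v = true ∧ σ w = true)

/-- Number of particles of a configuration. -/
def nParticles (σ : Cfg K L) : ℕ := (univ.filter fun v => σ v = true).card

/-- The energy (Hamiltonian) `H(σ) = -Σ_v σ(v)`. -/
def energy (σ : Cfg K L) : ℤ := -(nParticles K L σ : ℤ)

/-- The configuration `a`: indicator of `Λ_a` (columns `j ≡ 0 (mod 3)`). -/
def confA : Cfg K L := fun v => decide (v.1.2.val % 3 = 0)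

/-- The configuration `b`: indicator of `Λ_b` (columns `j ≡ 1 (mod 3)`). -/
def confB : Cfg K L := fun v => decide (v.1.2.val % 3 = 1)

/-- The configuration `c`: indicator of `Λ_c` (columns `j ≡ 2 (mod 3)`). -/
def confC : Cfg K L := fun v => decide (v.1.2.val % 3 = 2)

/-- A path in the energy landscape: a finite sequence of hard-core configurations,
consecutive ones differing in at most one vertex. -/
structure HCPath (σ σ' : Cfg K L) where
  n : ℕ
  ω : Fin (n + 1) → Cfg K L
  first : ω 0 = σ
  last : ω (Fin.last n) = σ'
  hc : ∀ i, HardCore K L (ω i)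
  step : ∀ i : Fin n,
    ((univ : Finset (Vert K L)).filter fun v => ω i.castSucc v ≠ ω i.succ v).card ≤ 1

/-- Height of a path: maximal energy along it. -/
noncomputable def pathHeight {σ σ' : Cfg K L} (p : HCPath K L σ σ') : ℤ :=
  Finset.univ.sup' Finset.univ_nonempty fun i => energy K L (p.ω i)

/-- Communication height `Φ(σ,σ')`: minimal height over all paths from `σ` to `σ'`. -/
noncomputable def commHeight (σ σ' : Cfg K L) : ℤ :=
  sInf {h : ℤ | ∃ p : HCPath K L σ σ', pathHeight K L p = h}

/-- The horizontal stripe `S_i = r_{2i} ∪ r_{2i+1}`. -/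
abbrev inHStripe (i : ℕ) (v : Vert K L) : Prop :=
  v.1.1 = ((2 * i : ℕ) : ZMod (2 * K)) ∨ v.1.1 = ((2 * i + 1 : ℕ) : ZMod (2 * K))

/-- The vertical stripe `C_j = c_j ∪ c_{j+1} ∪ c_{j+2}` (column indices mod `6L`). -/
abbrev inVStripe (j : ℕ) (v : Vert K L) : Prop :=
  v.1.2 = ((j : ℕ) : ZMod (6 * L)) ∨ v.1.2 = ((j + 1 : ℕ) : ZMod (6 * L)) ∨
    v.1.2 = ((j + 2 : ℕ) : ZMod (6 * L))

/-- Two configurations agree on a region. -/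
def agreesOn (P : Vert K L → Prop) (σ τ : Cfg K L) : Prop := ∀ v, P v → σ v = τ v

lemma add_parity (x y : ZMod (2*K)) : (x + y).val % 2 = (x.val + y.val) % 2 := by
  rw [ZMod.val_add, Nat.mod_mod_of_dvd _ ⟨K, rfl⟩]

lemma succ_parity (x : ZMod (2*K)) : (x + 1).val % 2 = (x.val + 1) % 2 := by
  have h1 : (1 : ZMod (2*K)).val = 1 := by
    have hK := NeZero.pos K
    have : ((1:ℕ) : ZMod (2*K)).val = 1 := ZMod.val_cast_of_lt (by omega)
    simpa using this
  rw [add_parity, h1]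

lemma pred_parity (x : ZMod (2*K)) : x.val % 2 = ((x - 1).val + 1) % 2 := by
  have := succ_parity K (x - 1)
  rw [show x - 1 + 1 = x by ring] at this
  omega

lemma castpar (x : ZMod (2*K)) (n : ℕ) : (x + (n : ZMod (2*K))).val % 2 = (x.val + n) % 2 := by
  have h1 := add_parity K x (n : ZMod (2*K))
  have h2 : ((n : ℕ) : ZMod (2*K)).val % 2 = n % 2 := by
    rw [ZMod.val_natCast]; exact Nat.mod_mod_of_dvd n ⟨K, rfl⟩
  omega

lemma parityCard (p : ℕ) (hp : p < 2) :
    ((univ : Finset (ZMod (2*K))).filter fun x => x.val % 2 = p).card = K := by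
  have hK := NeZero.pos K
  have key :
      ((univ : Finset (ZMod (2*K))).filter fun x => x.val % 2 = p).card
        = (univ : Finset (Fin K)).card := by
    refine Finset.card_bij' (fun (x : ZMod (2*K)) _ => (⟨x.val / 2, by have := ZMod.val_lt x; omega⟩ : Fin K))
      (fun (k : Fin K) _ => ((2 * k.1 + p : ℕ) : ZMod (2*K))) (fun x hx => mem_univ _) ?_ ?_ ?_
    · intro k _
      simp only [mem_filter, mem_univ, true_and]
      rw [ZMod.val_cast_of_lt (by have := k.2; omega)]
      omega
    · intro x hx
      simp only [mem_filter, mem_univ, true_and] at hx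
      have h2t : 2 * (x.val / 2) + p = x.val := by omega
      show ((2 * (x.val / 2) + p : ℕ) : ZMod (2*K)) = x
      rw [h2t]
      exact ZMod.natCast_rightInverse x
    · intro k _
      ext
      show ((2 * k.1 + p : ℕ) : ZMod (2*K)).val / 2 = k.1
      rw [ZMod.val_cast_of_lt (by have := k.2; omega)]
      omega
  simpa using key


/-- Efficient vertical stripes: every hard-core configuration has at most
`K` particles in each vertical stripe `C_{3j}`; moreover, if it has at least one particle
in `C_{3j} ∩ Λ_b`, then it has exactly `K` particles in `C_{3j}` if and only if it has a
black vertical bridge there (it agrees with `b` on `C_{3j}`). -/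
theorem efficient_vertical_stripes (hK : 2 ≤ K) (hL : 1 ≤ L)
    (σ : Cfg K L) (hσ : HardCore K L σ) (j : ℕ) (hj : j < 2 * L) :
    (((univ : Finset (Vert K L)).filter fun v => inVStripe K L (3 * j) v ∧ σ v = true).card
        ≤ K) ∧
    ((∃ v : Vert K L, inVStripe K L (3 * j) v ∧ v.1.2.val % 3 = 1 ∧ σ v = true) →
      ((((univ : Finset (Vert K L)).filter
            fun v => inVStripe K L (3 * j) v ∧ σ v = true).card = K) ↔
        agreesOn K L (inVStripe K L (3 * j)) σ (confB K L))) := by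
  classical
  have hKpos : 0 < K := NeZero.pos K
  have hcol0 : ((3*j : ℕ) : ZMod (6*L)).val = 3*j := ZMod.val_cast_of_lt (by omega)
  have hcol1 : ((3*j+1 : ℕ) : ZMod (6*L)).val = 3*j+1 := ZMod.val_cast_of_lt (by omega)
  have hcol2 : ((3*j+2 : ℕ) : ZMod (6*L)).val = 3*j+2 := ZMod.val_cast_of_lt (by omega)
  have hne01 : ((3*j : ℕ) : ZMod (6*L)) ≠ ((3*j+1 : ℕ) : ZMod (6*L)) := by
    intro h; rw [h, hcol1] at hcol0; omega
  have hne21 : ((3*j+2 : ℕ) : ZMod (6*L)) ≠ ((3*j+1 : ℕ) : ZMod (6*L)) := by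
    intro h; rw [h, hcol1] at hcol2; omega
  have hM10 : ((3*j+1 : ℕ) : ZMod (6*L)) = ((3*j : ℕ) : ZMod (6*L)) + 1 := by push_cast; ring
  have hM20 : ((3*j+2 : ℕ) : ZMod (6*L)) = ((3*j : ℕ) : ZMod (6*L)) + 2 := by push_cast; ring
  have hM21 : ((3*j+2 : ℕ) : ZMod (6*L)) = ((3*j+1 : ℕ) : ZMod (6*L)) + 1 := by push_cast; ring
  set S : Finset (Vert K L) :=
    (univ : Finset (Vert K L)).filter (fun v => inVStripe K L (3 * j) v ∧ σ v = true) with hS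
  set P : Finset (ZMod (2*K)) :=
    (univ : Finset (ZMod (2*K))).filter (fun x => x.val % 2 = (3*j) % 2) with hP
  set g : Vert K L → ZMod (2*K) :=
    (fun v => if v.1.2 = ((3*j+1 : ℕ) : ZMod (6*L)) then v.1.1 - 1 else v.1.1) with hg
  have hmemS : ∀ v : Vert K L, v ∈ S ↔ (inVStripe K L (3 * j) v ∧ σ v = true) := by
    intro v; rw [hS]; simp
  have hg0 : ∀ v : Vert K L, v.1.2 ≠ ((3*j+1 : ℕ) : ZMod (6*L)) → g v = v.1.1 := by
    intro v h; simp only [hg]; exact if_neg h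
  have hg1 : ∀ v : Vert K L, v.1.2 = ((3*j+1 : ℕ) : ZMod (6*L)) → g v = v.1.1 - 1 := by
    intro v h; simp only [hg]; exact if_pos h
  have ext2 : ∀ v w : Vert K L, v.1.1 = w.1.1 → v.1.2 = w.1.2 → v = w := by
    intro v w h1 h2
    exact Subtype.ext (Prod.ext h1 h2)
  have noadj : ∀ v w : Vert K L, σ v = true → σ w = true → Adj K L v w → False :=
    fun v w h1 h2 ha => hσ v w ha ⟨h1, h2⟩
  have hmaps : ∀ v ∈ S, g v ∈ P := by
    intro v hv
    rw [hmemS] at hv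
    have hpar := v.2
    simp only [hP, mem_filter, mem_univ, true_and]
    rcases hv.1 with h | h | h
    · rw [hg0 v (by rw [h]; exact hne01)]
      rw [h, hcol0] at hpar; omega
    · rw [hg1 v h]
      have hpp := pred_parity K v.1.1
      rw [h, hcol1] at hpar; omega
    · rw [hg0 v (by rw [h]; exact hne21)]
      rw [h, hcol2] at hpar; omega
  have hinj : Set.InjOn g ↑S := by
    intro v hv w hw hgvw
    rw [Finset.mem_coe, hmemS] at hv hw
    obtain ⟨hsv, hov⟩ := hv
    obtain ⟨hsw, how⟩ := hw
    rcases hsv with hv1 | hv1 | hv1 <;> rcases hsw with hw1 | hw1 | hw1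
    · rw [hg0 v (by rw [hv1]; exact hne01), hg0 w (by rw [hw1]; exact hne01)] at hgvw
      exact ext2 v w hgvw (hv1.trans hw1.symm)
    · rw [hg0 v (by rw [hv1]; exact hne01), hg1 w hw1] at hgvw
      exact (noadj v w hov how (Or.inr ⟨Or.inl (by rw [hgvw]; ring),
        Or.inl (by rw [hw1, hv1]; exact hM10)⟩)).elim
    · rw [hg0 v (by rw [hv1]; exact hne01), hg0 w (by rw [hw1]; exact hne21)] at hgvw
      exact (noadj v w hov how (Or.inl ⟨hgvw.symm,
        Or.inl (by rw [hw1, hv1]; exact hM20)⟩)).elim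
    · rw [hg1 v hv1, hg0 w (by rw [hw1]; exact hne01)] at hgvw
      exact (noadj v w hov how (Or.inr ⟨Or.inr hgvw.symm,
        Or.inr (by rw [hw1, hv1, hM10]; ring)⟩)).elim
    · rw [hg1 v hv1, hg1 w hw1] at hgvw
      have : v.1.1 = w.1.1 := by rwa [sub_left_inj] at hgvw
      exact ext2 v w this (hv1.trans hw1.symm)
    · rw [hg1 v hv1, hg0 w (by rw [hw1]; exact hne21)] at hgvw
      exact (noadj v w hov how (Or.inr ⟨Or.inr hgvw.symm,
        Or.inl (by rw [hw1, hv1]; exact hM21)⟩)).elim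
    · rw [hg0 v (by rw [hv1]; exact hne21), hg0 w (by rw [hw1]; exact hne01)] at hgvw
      exact (noadj v w hov how (Or.inl ⟨hgvw.symm,
        Or.inr (by rw [hw1, hv1, hM20]; ring)⟩)).elim
    · rw [hg0 v (by rw [hv1]; exact hne21), hg1 w hw1] at hgvw
      exact (noadj v w hov how (Or.inr ⟨Or.inl (by rw [hgvw]; ring),
        Or.inr (by rw [hw1, hv1, hM21]; ring)⟩)).elim
    · rw [hg0 v (by rw [hv1]; exact hne21), hg0 w (by rw [hw1]; exact hne21)] at hgvw
      exact ext2 v w hgvw (hv1.trans hw1.symm)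
  have hle : S.card ≤ K := by
    have h1 := Finset.card_le_card_of_injOn g hmaps hinj
    rw [hP] at h1
    rwa [parityCard K ((3*j) % 2) (by omega)] at h1
  refine ⟨hle, ?_⟩
  rintro ⟨v0, hst0, hmod0, hocc0⟩
  have hcolv0 : v0.1.2 = ((3*j+1 : ℕ) : ZMod (6*L)) := by
    rcases hst0 with h | h | h
    · rw [h, hcol0] at hmod0; omega
    · exact h
    · rw [h, hcol2] at hmod0; omega
  have rpar : v0.1.1.val % 2 = (3*j+1) % 2 := by
    have := v0.2; rw [hcolv0, hcol1] at this; omega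
  constructor
  · intro hcard
    have hsurj := Finset.surj_on_of_inj_on_of_card_le (s := S) (t := P)
      (fun a _ => g a) (fun a ha => hmaps a ha)
      (fun a₁ a₂ ha₁ ha₂ hh => hinj (Finset.mem_coe.mpr ha₁) (Finset.mem_coe.mpr ha₂) hh)
      (by rw [hcard, hP, parityCard K ((3*j) % 2) (by omega)])
    have claim : ∀ t : ℕ, ∀ v : Vert K L, v.1.2 = ((3*j+1 : ℕ) : ZMod (6*L)) →
        v.1.1 = v0.1.1 + ((2*t : ℕ) : ZMod (2*K)) → σ v = true := by
      intro t
      induction t with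
      | zero =>
        intro v hc hr
        have hveq : v = v0 := ext2 v v0 (by rw [hr]; simp) (hc.trans hcolv0.symm)
        rw [hveq]; exact hocc0
      | succ t ih =>
        intro v hc hr
        have hxP : v0.1.1 + ((2*t+1 : ℕ) : ZMod (2*K)) ∈ P := by
          simp only [hP, mem_filter, mem_univ, true_and]
          have := castpar K v0.1.1 (2*t+1)
          omega
        obtain ⟨w, hwS, hgw0⟩ := hsurj _ hxP
        have hgw : v0.1.1 + ((2*t+1 : ℕ) : ZMod (2*K)) = g w := hgw0
        rw [hmemS] at hwS
        obtain ⟨hwst, hwocc⟩ := hwS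
        rcases hwst with h | h | h
        · rw [hg0 w (by rw [h]; exact hne01)] at hgw
          have pu : ((w.1.1 - 1).val + ((3*j+1 : ℕ) : ZMod (6*L)).val) % 2 = 0 := by
            have hw2 := w.2; rw [h, hcol0] at hw2
            have := pred_parity K w.1.1
            rw [hcol1]; omega
          have huocc : σ ⟨(w.1.1 - 1, ((3*j+1 : ℕ) : ZMod (6*L))), pu⟩ = true := by
            apply ih _ rfl
            show w.1.1 - 1 = v0.1.1 + ((2*t : ℕ) : ZMod (2*K))
            rw [← hgw]; push_cast; ring
          exact (noadj _ w huocc hwocc (Or.inr ⟨Or.inl (by show w.1.1 = w.1.1 - 1 + 1; ring),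
            Or.inr (by show w.1.2 = ((3*j+1 : ℕ) : ZMod (6*L)) - 1; rw [h, hM10]; ring)⟩)).elim
        · rw [hg1 w h] at hgw
          have hww : w.1.1 = v.1.1 := by
            have h1 : w.1.1 = v0.1.1 + ((2*t+1 : ℕ) : ZMod (2*K)) + 1 := by
              rw [hgw]; ring
            rw [h1, hr]; push_cast; ring
          rw [ext2 v w hww.symm (hc.trans h.symm)]
          exact hwocc
        · rw [hg0 w (by rw [h]; exact hne21)] at hgw
          have pu : ((w.1.1 - 1).val + ((3*j+1 : ℕ) : ZMod (6*L)).val) % 2 = 0 := by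
            have hw2 := w.2; rw [h, hcol2] at hw2
            have := pred_parity K w.1.1
            rw [hcol1]; omega
          have huocc : σ ⟨(w.1.1 - 1, ((3*j+1 : ℕ) : ZMod (6*L))), pu⟩ = true := by
            apply ih _ rfl
            show w.1.1 - 1 = v0.1.1 + ((2*t : ℕ) : ZMod (2*K))
            rw [← hgw]; push_cast; ring
          exact (noadj _ w huocc hwocc (Or.inr ⟨Or.inl (by show w.1.1 = w.1.1 - 1 + 1; ring),
            Or.inl (by show w.1.2 = ((3*j+1 : ℕ) : ZMod (6*L)) + 1; rw [h, hM21])⟩)).elim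
    have hmidAll : ∀ v : Vert K L, v.1.2 = ((3*j+1 : ℕ) : ZMod (6*L)) → σ v = true := by
      intro v hc
      have hvpar : v.1.1.val % 2 = (3*j+1) % 2 := by
        have := v.2; rw [hc, hcol1] at this; omega
      have hd : (v.1.1 - v0.1.1).val % 2 = 0 := by
        have h1 := add_parity K v0.1.1 (v.1.1 - v0.1.1)
        rw [show v0.1.1 + (v.1.1 - v0.1.1) = v.1.1 by ring] at h1
        omega
      apply claim ((v.1.1 - v0.1.1).val / 2) v hc
      have h2t : 2 * ((v.1.1 - v0.1.1).val / 2) = (v.1.1 - v0.1.1).val := by omega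
      rw [h2t, ZMod.natCast_rightInverse (v.1.1 - v0.1.1)]
      ring
    show ∀ v, inVStripe K L (3 * j) v → σ v = confB K L v
    intro v hst
    rcases hst with h | h | h
    · have hbv : confB K L v = false := by
        simp only [confB, h, hcol0]
        exact decide_eq_false (by omega)
      rw [hbv]
      by_contra hvt
      have hvt' : σ v = true := by simpa using hvt
      have pu : ((v.1.1 + 1).val + ((3*j+1 : ℕ) : ZMod (6*L)).val) % 2 = 0 := by
        have h2 := v.2; rw [h, hcol0] at h2
        have := succ_parity K v.1.1
        rw [hcol1]; omega
      have hu := hmidAll ⟨(v.1.1 + 1, ((3*j+1 : ℕ) : ZMod (6*L))), pu⟩ rfl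
      exact (noadj v _ hvt' hu (Or.inr ⟨Or.inl rfl,
        Or.inl (by show ((3*j+1 : ℕ) : ZMod (6*L)) = v.1.2 + 1; rw [h]; exact hM10)⟩)).elim
    · have h1 := hmidAll v h
      have h2 : confB K L v = true := by
        simp only [confB, h, hcol1]
        exact decide_eq_true (by omega)
      rw [h1, h2]
    · have hbv : confB K L v = false := by
        simp only [confB, h, hcol2]
        exact decide_eq_false (by omega)
      rw [hbv]
      by_contra hvt
      have hvt' : σ v = true := by simpa using hvt
      have pu : ((v.1.1 + 1).val + ((3*j+1 : ℕ) : ZMod (6*L)).val) % 2 = 0 := by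
        have h2 := v.2; rw [h, hcol2] at h2
        have := succ_parity K v.1.1
        rw [hcol1]; omega
      have hu := hmidAll ⟨(v.1.1 + 1, ((3*j+1 : ℕ) : ZMod (6*L))), pu⟩ rfl
      exact (noadj v _ hvt' hu (Or.inr ⟨Or.inl rfl,
        Or.inr (by show ((3*j+1 : ℕ) : ZMod (6*L)) = v.1.2 - 1; rw [h, hM21]; ring)⟩)).elim
  · intro hag
    have hag' : ∀ v : Vert K L, inVStripe K L (3 * j) v → σ v = confB K L v := hag
    have hSeq : S = (univ : Finset (Vert K L)).filter
        (fun v => v.1.2 = ((3*j+1 : ℕ) : ZMod (6*L))) := by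
      ext v
      rw [hmemS, mem_filter]
      simp only [mem_univ, true_and]
      constructor
      · rintro ⟨hst, hocc⟩
        rcases hst with h | h | h
        · exfalso
          have hb := hag' v (Or.inl h)
          rw [hocc] at hb
          simp only [confB, h, hcol0] at hb
          have := of_decide_eq_true hb.symm; omega
        · exact h
        · exfalso
          have hb := hag' v (Or.inr (Or.inr h))
          rw [hocc] at hb
          simp only [confB, h, hcol2] at hb
          have := of_decide_eq_true hb.symm; omega
      · intro h
        refine ⟨Or.inr (Or.inl h), ?_⟩
        rw [hag' v (Or.inr (Or.inl h))]
        simp only [confB, h, hcol1]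
        exact decide_eq_true (by omega)
    rw [hSeq]
    have key : ((univ : Finset (Vert K L)).filter
        (fun v => v.1.2 = ((3*j+1 : ℕ) : ZMod (6*L)))).card = P.card := by
      refine Finset.card_bij' (fun (v : Vert K L) _ => v.1.1 - 1)
        (fun x hx => (⟨(x + 1, ((3*j+1 : ℕ) : ZMod (6*L))), by
          simp only [hP, mem_filter, mem_univ, true_and] at hx
          have := succ_parity K x
          show ((x + 1).val + ((3*j+1 : ℕ) : ZMod (6*L)).val) % 2 = 0
          rw [hcol1]; omega⟩ : Vert K L)) ?_ ?_ ?_ ?_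
      · intro v hv
        simp only [mem_filter, mem_univ, true_and] at hv
        simp only [hP, mem_filter, mem_univ, true_and]
        have h2 := v.2; rw [hv, hcol1] at h2
        have := pred_parity K v.1.1
        show (v.1.1 - 1).val % 2 = 3 * j % 2
        omega
      · intro x hx
        simp only [mem_filter, mem_univ, true_and]
      · intro v hv
        simp only [mem_filter, mem_univ, true_and] at hv
        refine ext2 _ _ ?_ ?_
        · show v.1.1 - 1 + 1 = v.1.1; ring
        · show ((3*j+1 : ℕ) : ZMod (6*L)) = v.1.2; exact hv.symm
      · intro x hx
        show x + 1 - 1 = x; ring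
    rw [key, hP, parityCard K ((3*j) % 2) (by omega)]
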